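/- Let X be a compact Hausdorff totally disconnected topological space, let k be a field, and let Z_1, …, Z_n be closed subsets of X. For a subset S ⊆ {1, …, n} let X_S = ⋂_{i ∈ S} Z_i (with X_∅ = X), and let LC(Y, k) denote the k-vector space of locally constant functions Y → k. Form the complex 0 → LC(X_∅, k) → ⊕_{|S|=1} LC(X_S, k) → ⊕_{|S|=2} LC(X_S, k) → ⋯ → LC(X_{{1,…,n}}, k) → 0, whose differential is the alternating sum (with signs (−1)^{|{t ∈ S : t < s}|} for adjoining an index s to S) of the restriction maps LC(X_S, k) → LC(X_{S ∪ {s}}, k). Then this complex is exact in all positive degrees (its cohomology vanishes in every degree ≥ 1). -/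
import Mathlib


/-- For closed subsets `Z 0, …, Z (n-1)` of a space `X` and a finset `S` of indices,
the inclusion of `⋂_{j ∈ S ∪ {s}} Z j` into `⋂_{j ∈ S} Z j` (removal of one index
enlarges the intersection). -/
theorem interInclusion {X : Type} {n : ℕ} (Z : Fin n → Set X) (S : Finset (Fin n))
    (s : Fin n) : (⋂ j ∈ S, Z j) ⊆ ⋂ j ∈ S.erase s, Z j := by
  intro x hx
  simp only [Set.mem_iInter] at hx ⊢
  exact fun j hj => hx j (Finset.mem_of_mem_erase hj)

/-- The differential of the inclusion–exclusion complex of locally constant functions: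
`C^i = ⊕_{|S| = i} LC(X_S, k)` where `X_S = ⋂_{j ∈ S} Z j`, and
`(dφ)(S) = ∑_{s ∈ S} (-1)^{#{t ∈ S \ {s} : t < s}} • (φ (S \ {s}))|_{X_S}`. -/
noncomputable def lcDiff (X : Type) [TopologicalSpace X] (k : Type) [Field k]
    (n : ℕ) (Z : Fin n → Set X) (i : ℕ)
    (φ : ∀ S : {S : Finset (Fin n) // S.card = i}, LocallyConstant (↥(⋂ j ∈ S.1, Z j)) k) :
    ∀ S : {S : Finset (Fin n) // S.card = i + 1}, LocallyConstant (↥(⋂ j ∈ S.1, Z j)) k :=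
  fun S => ∑ s ∈ S.1.attach,
    ((-1 : ℤ) ^ ((S.1.erase s.1).filter (fun t => t < s.1)).card) •
      LocallyConstant.comap
        ⟨Set.inclusion (interInclusion Z S.1 s.1),
          continuous_inclusion (interInclusion Z S.1 s.1)⟩
        (φ ⟨S.1.erase s.1, by rw [Finset.card_erase_of_mem s.2, S.2]; omega⟩)

section Aux



variable {X : Type} [TopologicalSpace X] [CompactSpace X] [T2Space X] [TotallyDisconnectedSpace X]

/-- clopen sandwich: a closed set inside an open set admits a clopen set in between. -/
lemma clopen_sandwich {C V : Set X} (hC : IsClosed C) (hV : IsOpen V) (hCV : C ⊆ V) :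
    ∃ K : Set X, IsClopen K ∧ C ⊆ K ∧ K ⊆ V := by
  choose! K hK hxK hKV using fun (x : X) (hx : x ∈ C) => compact_exists_isClopen_in_isOpen hV (hCV hx)
  obtain ⟨t, ht⟩ := hC.isCompact.elim_finite_subcover (fun x : C => K x)
    (fun x => (hK x x.2).2) (fun x hx => Set.mem_iUnion.2 ⟨⟨x, hx⟩, hxK x hx⟩)
  refine ⟨⋃ x ∈ t, K x, isClopen_biUnion_finset (fun x _ => hK x x.2), ht, ?_⟩
  exact Set.iUnion₂_subset fun x _ => hKV x x.2
variable {X : Type} [TopologicalSpace X] [CompactSpace X] [T2Space X] [TotallyDisconnectedSpace X]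
variable {k : Type} [Field k]

lemma lc_extend_aux (R : Finset k) :
    ∀ (A : Set X), IsClosed A → ∀ f : LocallyConstant A k, (∀ a, f a ∈ R) →
      ∃ F : LocallyConstant X k, ∀ a : A, F ↑a = f a := by
  classical
  induction R using Finset.induction_on with
  | empty =>
    intro A _ f hf
    exact ⟨0, fun a => absurd (hf a) (Finset.notMem_empty _)⟩
  | @insert v R hv ih =>
    intro A hA f hf
    -- C : points with value v, D : the rest (as subsets of X)
    have hfib : IsClopen (f ⁻¹' {v}) := f.isLocallyConstant.isClopen_fiber v
    have hCemb : Topology.IsClosedEmbedding (Subtype.val : A → X) := hA.isClosedEmbedding_subtypeVal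
    set C : Set X := Subtype.val '' (f ⁻¹' {v}) with hCdef
    set D : Set X := Subtype.val '' (f ⁻¹' {v})ᶜ with hDdef
    have hCcl : IsClosed C := hCemb.isClosed_iff_image_isClosed.1 hfib.1
    have hDcl : IsClosed D := hCemb.isClosed_iff_image_isClosed.1 hfib.2.isClosed_compl
    have hDA : D ⊆ A := by rintro x ⟨y, _, rfl⟩; exact y.2
    -- restriction of f to D
    let ι : C(D, A) := ⟨fun x => ⟨x.1, hDA x.2⟩, Continuous.subtype_mk (continuous_subtype_val) _⟩
    let g : LocallyConstant D k := f.comap ι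
    have hgval : ∀ d : D, g d = f ⟨d.1, hDA d.2⟩ := fun d => rfl
    have hgR : ∀ d, g d ∈ R := by
      rintro ⟨x, y, hy, rfl⟩
      have : f ⟨y.1, hDA ⟨y, hy, rfl⟩⟩ = f y := by congr
      rw [hgval, this]
      rcases Finset.mem_insert.1 (hf y) with h | h
      · exact absurd h hy
      · exact h
    obtain ⟨G, hG⟩ := ih D hDcl g hgR
    -- clopen K separating C from D
    have hCD : C ⊆ Dᶜ := by
      rintro x ⟨y, hy, rfl⟩ ⟨z, hz, hzx⟩
      exact hz (by rwa [show z = y from Subtype.ext hzx])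
    obtain ⟨K, hK, hCK, hKD⟩ := clopen_sandwich hCcl hDcl.isOpen_compl hCD
    refine ⟨v • LocallyConstant.charFn k hK + (1 - LocallyConstant.charFn k hK) * G, ?_⟩
    intro a
    by_cases hav : f a = v
    · have haK : ↑a ∈ K := hCK ⟨a, hav, rfl⟩
      simp only [LocallyConstant.add_apply, LocallyConstant.smul_apply, LocallyConstant.mul_apply,
        LocallyConstant.sub_apply, LocallyConstant.coe_one, Pi.one_apply]
      rw [show LocallyConstant.charFn k hK ↑a = (1:k) by
        rw [(LocallyConstant.charFn_eq_one (Y := k) _ hK)]; exact haK]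
      simp [hav]
    · have haD : ↑a ∈ D := ⟨a, hav, rfl⟩
      have haK : ↑a ∉ K := fun h => hKD h haD
      have : G ↑a = f a := by
        have := hG ⟨↑a, haD⟩
        rw [hgval] at this
        rw [this]
      simp only [LocallyConstant.add_apply, LocallyConstant.smul_apply, LocallyConstant.mul_apply,
        LocallyConstant.sub_apply, LocallyConstant.coe_one, Pi.one_apply]
      rw [show LocallyConstant.charFn k hK ↑a = (0:k) by
        rw [(LocallyConstant.charFn_eq_zero (Y := k) _ hK)]; exact haK]
      simp [this]

/-- Extension of locally constant functions from closed subsets of a profinite-type space. -/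
lemma lc_extend {A : Set X} (hA : IsClosed A) (f : LocallyConstant A k) :
    ∃ F : LocallyConstant X k, ∀ a : A, F ↑a = f a := by
  haveI : CompactSpace A := isCompact_iff_compactSpace.1 hA.isCompact
  obtain ⟨R, hR⟩ := f.range_finite.exists_finset_coe
  exact lc_extend_aux R A hA f (fun a => by
    rw [← Finset.mem_coe, hR]; exact Set.mem_range_self a)


variable {X : Type} [TopologicalSpace X] [CompactSpace X] [T2Space X] [TotallyDisconnectedSpace X]

/-- Single-constraint clopen approximation: closed sets `Z j` with `⋂_{j ∈ T} Z j ⊆ V` open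
can be thickened to clopens `U j ⊇ Z j` with `⋂_{j ∈ T} U j ⊆ V`. -/
lemma clopen_approx_single {n : ℕ} (Z : Fin n → Set X) (hZ : ∀ j, IsClosed (Z j))
    (T : Finset (Fin n)) {V : Set X} (hV : IsOpen V) (hTV : (⋂ j ∈ T, Z j) ⊆ V) :
    ∃ U : Fin n → Set X, (∀ j, IsClopen (U j)) ∧ (∀ j, Z j ⊆ U j) ∧ (⋂ j ∈ T, U j) ⊆ V := by
  classical
  have hsel : ∀ x : (Vᶜ : Set X), ∃ j, j ∈ T ∧ ∃ K : Set X, IsClopen K ∧ ↑x ∈ K ∧ K ⊆ (Z j)ᶜ := by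
    rintro ⟨x, hx⟩
    have : x ∉ ⋂ j ∈ T, Z j := fun h => hx (hTV h)
    simp only [Set.mem_iInter, not_forall] at this
    obtain ⟨j, hjT, hxj⟩ := this
    obtain ⟨K, hK, hxK, hKZ⟩ := compact_exists_isClopen_in_isOpen (hZ j).isOpen_compl hxj
    exact ⟨j, hjT, K, hK, hxK, hKZ⟩
  choose jx hjT K hK hxK hKZ using hsel
  have hVc : IsCompact (Vᶜ : Set X) := hV.isClosed_compl.isCompact
  obtain ⟨t, ht⟩ := hVc.elim_finite_subcover K (fun x => (hK x).2)
    (fun x hx => Set.mem_iUnion.2 ⟨⟨x, hx⟩, hxK ⟨x, hx⟩⟩)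
  refine ⟨fun j => (⋃ x ∈ t.filter (fun x => jx x = j), K x)ᶜ, ?_, ?_, ?_⟩
  · intro j; exact (isClopen_biUnion_finset (fun x _ => hK x)).compl
  · intro j z hz
    simp only [Set.mem_compl_iff, Set.mem_iUnion, not_exists]
    intro x hxt hzK
    have hxj : jx x = j := (Finset.mem_filter.1 hxt).2
    exact (hKZ x hzK) (hxj ▸ hz)
  · intro z hz
    by_contra hzV
    obtain ⟨x, hxt, hzK⟩ := Set.mem_iUnion₂.1 (ht hzV)
    have hzU := Set.mem_iInter₂.1 hz (jx x) (hjT x)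
    exact hzU (Set.mem_iUnion₂.2 ⟨x, Finset.mem_filter.2 ⟨hxt, rfl⟩, hzK⟩)

/-- Simultaneous clopen approximation for a finite family of constraints. -/
lemma clopen_approx {n : ℕ} (Z : Fin n → Set X) (hZ : ∀ j, IsClosed (Z j))
    {ι : Type} [Fintype ι] (T : ι → Finset (Fin n)) {V : ι → Set X}
    (hV : ∀ a, IsOpen (V a)) (hTV : ∀ a, (⋂ j ∈ T a, Z j) ⊆ V a) :
    ∃ U : Fin n → Set X, (∀ j, IsClopen (U j)) ∧ (∀ j, Z j ⊆ U j) ∧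
      ∀ a, (⋂ j ∈ T a, U j) ⊆ V a := by
  classical
  choose U hUc hZU hUV using fun a => clopen_approx_single Z hZ (T a) (hV a) (hTV a)
  refine ⟨fun j => ⋂ a, U a j, fun j => ?_, fun j => Set.subset_iInter fun a => hZU a j, fun a => ?_⟩
  · show IsClopen (⋂ a, U a j)
    have h2 : (⋂ a, U a j) = ⋂ a ∈ (Set.univ : Set ι), U a j := by simp
    rw [h2]
    exact Set.Finite.isClopen_biInter Set.finite_univ (fun a _ => hUc a j)
  · exact subset_trans (Set.iInter₂_mono fun j _ => Set.iInter_subset _ a) (hUV a)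


/-- The sign `(-1)^{#{t ∈ T : t < s}}` of inserting `s` into `T`, valued in `k`. -/
def eps (k : Type) [Field k] {n : ℕ} (s : Fin n) (T : Finset (Fin n)) : k :=
  (-1) ^ (T.filter (fun t => t < s)).card

variable {k : Type} [Field k] {n : ℕ}

lemma eps_insert {s t : Fin n} {T : Finset (Fin n)} (ht : t ∉ T) :
    eps k s (insert t T) = (if t < s then -1 else 1) * eps k s T := by
  unfold eps
  rw [Finset.filter_insert]
  split
  · rw [Finset.card_insert_of_notMem (fun h => ht (Finset.mem_of_mem_filter t h)), pow_succ]
    ring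
  · rw [one_mul]

lemma eps_mul_self (s : Fin n) (T : Finset (Fin n)) : eps k s T * eps k s T = 1 := by
  unfold eps
  rw [← pow_add]
  exact Even.neg_one_pow ⟨_, rfl⟩

lemma eps_swap {s t : Fin n} {T : Finset (Fin n)} (hs : s ∉ T) (ht : t ∉ T) (hst : s ≠ t) :
    eps k s (insert t T) * eps k t T = -(eps k t (insert s T) * eps k s T) := by
  rw [eps_insert ht, eps_insert hs]
  rcases lt_or_gt_of_ne hst with h | h
  · simp only [if_neg (asymm h), if_pos h]
    ring
  · simp only [if_pos h, if_neg (asymm h)]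
    ring

/-- The double alternating sum over pairs of distinct removals cancels. -/
lemma double_cancel (S : Finset (Fin n)) (P : Finset (Fin n) → k) :
    ∑ s ∈ S, (eps k s (S.erase s) *
      ∑ r ∈ S.erase s, eps k r ((S.erase s).erase r) * P ((S.erase s).erase r)) = 0 := by
  classical
  have : ∀ s ∈ S, (eps k s (S.erase s) *
      ∑ r ∈ S.erase s, eps k r ((S.erase s).erase r) * P ((S.erase s).erase r))
      = ∑ r ∈ S.erase s, eps k s (S.erase s) *
          (eps k r ((S.erase s).erase r) * P ((S.erase s).erase r)) := by
    intro s _; rw [Finset.mul_sum]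
  rw [Finset.sum_congr rfl this, Finset.sum_sigma']
  refine Finset.sum_involution (fun a _ => ⟨a.2, a.1⟩) ?_ ?_ ?_ ?_
  · rintro ⟨s, r⟩ ha
    obtain ⟨hsS, hrS⟩ := Finset.mem_sigma.1 ha
    have hrs : r ≠ s := Finset.ne_of_mem_erase hrS
    have hrS' : r ∈ S := Finset.mem_of_mem_erase hrS
    have hsr : s ∈ S.erase r := Finset.mem_erase.2 ⟨hrs.symm, hsS⟩
    set T := (S.erase s).erase r with hT
    have hT2 : (S.erase r).erase s = T := Finset.erase_right_comm
    have h1 : S.erase s = insert r T := (Finset.insert_erase hrS).symm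
    have h2 : S.erase r = insert s T := by rw [← hT2]; exact (Finset.insert_erase hsr).symm
    have hsT : s ∉ T := fun h => Finset.notMem_erase s S (Finset.mem_of_mem_erase (hT ▸ h))
    have hrT : r ∉ T := fun h => Finset.notMem_erase r (S.erase s) (hT ▸ h)
    show eps k s (S.erase s) * (eps k r ((S.erase s).erase r) * P ((S.erase s).erase r))
      + eps k r (S.erase r) * (eps k s ((S.erase r).erase s) * P ((S.erase r).erase s)) = 0
    rw [hT2, ← hT, h1, h2]
    have := eps_swap (k := k) hsT hrT (fun h => hrs h.symm)
    linear_combination P T * this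
  · rintro ⟨s, r⟩ ha _ h
    obtain ⟨hsS, hrS⟩ := Finset.mem_sigma.1 ha
    have : r = s := congrArg Sigma.fst h
    exact Finset.ne_of_mem_erase hrS this
  · rintro ⟨s, r⟩ ha
    obtain ⟨hsS, hrS⟩ := Finset.mem_sigma.1 ha
    exact Finset.mem_sigma.2 ⟨Finset.mem_of_mem_erase hrS,
      Finset.mem_erase.2 ⟨(Finset.ne_of_mem_erase hrS).symm, hsS⟩⟩
  · rintro ⟨s, r⟩ ha; rfl

open Finset in
/-- The key pointwise computation: evaluating the candidate primitive's differential. -/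
lemma key_alg (S : Finset (Fin n)) {i : ℕ} (hS : S.card = i + 1)
    (F : Finset (Fin n) → k) (w : Fin n → k) (t0 : Fin n)
    (hw : ∀ t, w t = if t = t0 then 1 else 0)
    (hco : t0 ∉ S → ∑ s ∈ insert t0 S,
      eps k s ((insert t0 S).erase s) * F ((insert t0 S).erase s) = 0) :
    ∑ s ∈ S, eps k s (S.erase s) *
      (∑ t ∈ (S.erase s)ᶜ, eps k t (S.erase s) * w t * F (insert t (S.erase s))) = F S := by
  -- simplify the inner sums
  have inner : ∀ s ∈ S, (∑ t ∈ (S.erase s)ᶜ, eps k t (S.erase s) * w t * F (insert t (S.erase s)))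
      = if t0 ∈ S.erase s then 0 else eps k t0 (S.erase s) * F (insert t0 (S.erase s)) := by
    intro s _
    by_cases h : t0 ∈ S.erase s
    · rw [if_pos h]
      refine Finset.sum_eq_zero fun t htc => ?_
      have : t ≠ t0 := fun e => (Finset.mem_compl.1 htc) (e ▸ h)
      rw [hw, if_neg this]; ring
    · rw [if_neg h]
      rw [Finset.sum_eq_single t0]
      · rw [hw, if_pos rfl]; ring
      · intro t _ hne; rw [hw, if_neg hne]; ring
      · intro hc; exact absurd (Finset.mem_compl.2 h) hc
  rw [Finset.sum_congr rfl (fun s hs => by rw [inner s hs])]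
  by_cases ht0 : t0 ∈ S
  · -- only the `s = t0` term survives
    rw [Finset.sum_eq_single t0]
    · rw [if_neg (Finset.notMem_erase t0 S), Finset.insert_erase ht0, ← mul_assoc,
        eps_mul_self, one_mul]
    · intro s hsS hne
      rw [if_pos (Finset.mem_erase.2 ⟨fun e => hne e.symm, ht0⟩), mul_zero]
    · intro h; exact absurd ht0 h
  · -- use the cocycle relation on `insert t0 S`
    have hsum := hco ht0
    rw [Finset.sum_insert ht0, Finset.erase_insert ht0] at hsum
    have step : ∀ s ∈ S, eps k s (S.erase s) *
        (if t0 ∈ S.erase s then 0 else eps k t0 (S.erase s) * F (insert t0 (S.erase s)))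
        = (-(eps k t0 S)) * (eps k s ((insert t0 S).erase s) * F ((insert t0 S).erase s)) := by
      intro s hsS
      have hst0 : s ≠ t0 := fun e => ht0 (e ▸ hsS)
      have hnt0 : t0 ∉ S.erase s := fun h => ht0 (Finset.mem_of_mem_erase h)
      rw [if_neg hnt0]
      have he : (insert t0 S).erase s = insert t0 (S.erase s) :=
        Finset.erase_insert_of_ne hst0.symm
      have hsw := eps_swap (k := k) (s := t0) (t := s) (T := S.erase s)
        hnt0 (Finset.notMem_erase s S) (fun e => hst0 e.symm)
      rw [Finset.insert_erase hsS] at hsw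
      rw [he]
      have ha := eps_mul_self (k := k) t0 S
      have hd := eps_mul_self (k := k) t0 (S.erase s)
      linear_combination (F (insert t0 (S.erase s)) * eps k t0 S * eps k t0 (S.erase s)) * hsw
        - (F (insert t0 (S.erase s)) * eps k s (S.erase s) * eps k t0 (S.erase s)) * ha
        - (F (insert t0 (S.erase s)) * eps k t0 S * eps k s (insert t0 (S.erase s))) * hd
    rw [Finset.sum_congr rfl step, ← Finset.mul_sum]
    have : ∑ s ∈ S, eps k s ((insert t0 S).erase s) * F ((insert t0 S).erase s)
        = -(eps k t0 S * F S) := by linear_combination hsum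
    rw [this]
    have := eps_mul_self (k := k) t0 S
    linear_combination F S * this

lemma lc_sum_apply {Y M : Type} [TopologicalSpace Y] [AddCommMonoid M] {α : Type}
    (s : Finset α) (f : α → LocallyConstant Y M) (y : Y) :
    (∑ a ∈ s, f a) y = ∑ a ∈ s, f a y :=
  map_sum (LocallyConstant.evalAddMonoidHom y) f s

/-- Pointwise evaluation of `lcDiff` in terms of a "totalized" value function `G`. -/
lemma lcDiff_apply (X : Type) [TopologicalSpace X] (k : Type) [Field k]
    (n : ℕ) (Z : Fin n → Set X) (m : ℕ)
    (ψ : ∀ S : {S : Finset (Fin n) // S.card = m}, LocallyConstant (↥(⋂ j ∈ S.1, Z j)) k)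
    (S : Finset (Fin n)) (hS : S.card = m + 1) (x : ↥(⋂ j ∈ S, Z j))
    (G : Finset (Fin n) → k)
    (hG : ∀ T (hT : T.card = m) (hx : ↑x ∈ ⋂ j ∈ T, Z j), G T = ψ ⟨T, hT⟩ ⟨↑x, hx⟩) :
    lcDiff X k n Z m ψ ⟨S, hS⟩ x = ∑ s ∈ S, eps k s (S.erase s) * G (S.erase s) := by
  unfold lcDiff
  rw [lc_sum_apply]
  rw [← Finset.sum_attach S (fun s => eps k s (S.erase s) * G (S.erase s))]
  refine Finset.sum_congr rfl fun s _ => ?_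
  have hmem : (↑x : X) ∈ ⋂ j ∈ S.erase s.1, Z j := interInclusion Z S s.1 x.2
  have hcard : (S.erase s.1).card = m := by rw [Finset.card_erase_of_mem s.2, hS]; omega
  simp only [LocallyConstant.evalAddMonoidHom_apply, LocallyConstant.coe_smul, Pi.smul_apply,
    LocallyConstant.coe_comap, ContinuousMap.coe_mk, Function.comp_apply]
  rw [hG (S.erase s.1) hcard hmem]
  rw [zsmul_eq_mul]
  push_cast
  rfl

end Aux

/-- Let `X` be a compact Hausdorff totally disconnected space, `k` a field and
`Z 0, …, Z (n-1)` closed subsets of `X`.  The inclusion–exclusion complex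
`0 → LC(X, k) → ⊕_{|S|=1} LC(X_S, k) → ⋯ → LC(X_{⋂ all}, k) → 0` of spaces of locally
constant functions on the intersections `X_S = ⋂_{j ∈ S} Z j` (with `X_∅ = X`), with the
alternating sums of restriction maps as differentials, is exact in every positive degree:
in each degree `≥ 1` the kernel of the differential equals the image of the previous one. -/
theorem lc_inclusion_exclusion_complex_exact
    (X : Type) [TopologicalSpace X] [CompactSpace X] [T2Space X] [TotallyDisconnectedSpace X]
    (k : Type) [Field k] (n : ℕ) (Z : Fin n → Set X) (hZ : ∀ j, IsClosed (Z j)) :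
    ∀ (i : ℕ)
      (φ : ∀ S : {S : Finset (Fin n) // S.card = i + 1},
        LocallyConstant (↥(⋂ j ∈ S.1, Z j)) k),
      lcDiff X k n Z (i + 1) φ = 0 ↔
        ∃ ψ : ∀ S : {S : Finset (Fin n) // S.card = i},
          LocallyConstant (↥(⋂ j ∈ S.1, Z j)) k, lcDiff X k n Z i ψ = φ := by
  intro i φ
  classical
  have hXScl : ∀ T : Finset (Fin n), IsClosed (⋂ j ∈ T, Z j) :=
    fun T => isClosed_biInter (fun j _ => hZ j)
  constructor
  · -- hard direction
    intro hd
    -- extend each φ S to all of X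
    choose φt hφt using fun S : {S : Finset (Fin n) // S.card = i + 1} =>
      lc_extend (hXScl S.1) (φ S)
    -- the totalization of the extensions, at a point
    set Ft : X → Finset (Fin n) → k :=
      fun x0 T => if h : T.card = i + 1 then φt ⟨T, h⟩ x0 else 0 with hFt
    -- the extended differential
    set g : {S : Finset (Fin n) // S.card = i + 2} → LocallyConstant X k := fun S' =>
      ∑ s ∈ S'.1.attach, eps k s.1 (S'.1.erase s.1) •
        φt ⟨S'.1.erase s.1, by rw [Finset.card_erase_of_mem s.2, S'.2]; omega⟩ with hgdef
    have hgeval : ∀ (S' : {S : Finset (Fin n) // S.card = i + 2}) (x0 : X),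
        g S' x0 = ∑ s ∈ S'.1, eps k s (S'.1.erase s) * Ft x0 (S'.1.erase s) := by
      intro S' x0
      rw [hgdef, lc_sum_apply,
        ← Finset.sum_attach S'.1 (fun s => eps k s (S'.1.erase s) * Ft x0 (S'.1.erase s))]
      refine Finset.sum_congr rfl fun s _ => ?_
      have hc : (S'.1.erase s.1).card = i + 1 := by
        rw [Finset.card_erase_of_mem s.2, S'.2]; omega
      simp only [LocallyConstant.coe_smul, Pi.smul_apply, smul_eq_mul, hFt, dif_pos hc]
    have hg0 : ∀ (S' : {S : Finset (Fin n) // S.card = i + 2}) (x0 : X)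
        (hx0 : x0 ∈ ⋂ j ∈ S'.1, Z j), g S' x0 = 0 := by
      intro S' x0 hx0
      rw [hgeval]
      have h1 : lcDiff X k n Z (i + 1) φ ⟨S'.1, S'.2⟩ ⟨x0, hx0⟩ = 0 := by
        rw [hd]; rfl
      rw [← h1]
      rw [lcDiff_apply X k n Z (i + 1) φ S'.1 S'.2 ⟨x0, hx0⟩ (Ft x0)]
      intro T hT hx
      simp only [hFt, dif_pos hT]
      exact hφt ⟨T, hT⟩ ⟨x0, hx⟩
    -- clopen approximations U j ⊇ Z j adapted to the vanishing loci of g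
    obtain ⟨U, hUc, hZU, hUV⟩ := clopen_approx Z hZ
      (ι := {S : Finset (Fin n) // S.card = i + 2}) (fun S' => S'.1)
      (V := fun S' => ⇑(g S') ⁻¹' {0})
      (fun S' => (g S').isLocallyConstant {0})
      (fun S' x0 hx0 => hg0 S' x0 hx0)
    -- the disjointified clopen partition pieces
    set W : Fin n → Set X := fun t =>
      U t \ ⋃ u ∈ Finset.univ.filter (fun u => u < t), U u with hWdef
    have hWc : ∀ t, IsClopen (W t) :=
      fun t => (hUc t).diff (isClopen_biUnion_finset (fun u _ => hUc u))
    have hW_iff : ∀ (x0 : X) (t : Fin n),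
        x0 ∈ W t ↔ x0 ∈ U t ∧ ∀ u, u < t → x0 ∉ U u := by
      intro x0 t
      simp only [hWdef, Set.mem_diff, Set.mem_iUnion, Finset.mem_filter, Finset.mem_univ,
        true_and, not_exists]
    -- the candidate primitive
    set ψ : ∀ S : {S : Finset (Fin n) // S.card = i},
        LocallyConstant (↥(⋂ j ∈ S.1, Z j)) k := fun S =>
      ∑ t ∈ (S.1ᶜ).attach, eps k t.1 S.1 •
        LocallyConstant.comap
          ⟨(Subtype.val : ↥(⋂ j ∈ S.1, Z j) → X), continuous_subtype_val⟩
          (LocallyConstant.charFn k (hWc t.1) *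
            φt ⟨insert t.1 S.1, by
              rw [Finset.card_insert_of_notMem (Finset.mem_compl.1 t.2), S.2]⟩) with hψdef
    have hψeval : ∀ (T : Finset (Fin n)) (hT : T.card = i) (x0 : X)
        (hx0 : x0 ∈ ⋂ j ∈ T, Z j),
        ψ ⟨T, hT⟩ ⟨x0, hx0⟩ = ∑ t ∈ Tᶜ,
          eps k t T * (if x0 ∈ W t then (1 : k) else 0) * Ft x0 (insert t T) := by
      intro T hT x0 hx0
      rw [hψdef, lc_sum_apply, ← Finset.sum_attach Tᶜ
        (fun t => eps k t T * (if x0 ∈ W t then (1 : k) else 0) * Ft x0 (insert t T))]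
      refine Finset.sum_congr rfl fun t _ => ?_
      have hc : (insert t.1 T).card = i + 1 :=
        by rw [Finset.card_insert_of_notMem (Finset.mem_compl.1 t.2), hT]
      simp only [LocallyConstant.coe_smul, Pi.smul_apply, smul_eq_mul,
        LocallyConstant.coe_comap, ContinuousMap.coe_mk, Function.comp_apply,
        LocallyConstant.coe_mul, Pi.mul_apply, LocallyConstant.coe_charFn,
        Set.indicator_apply, Pi.one_apply, hFt, dif_pos hc]
      ring
    refine ⟨ψ, ?_⟩
    funext S
    obtain ⟨S, hS⟩ := S
    apply LocallyConstant.ext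
    intro x
    have hx0 : (↑x : X) ∈ ⋂ j ∈ S, Z j := x.2
    set x0 : X := ↑x with hx0def
    -- locate the point in the clopen partition
    have hSne : S.Nonempty := Finset.card_pos.1 (by omega)
    obtain ⟨s0, hs0⟩ := hSne
    have hx0Z : ∀ j, j ∈ S → x0 ∈ Z j := by
      intro j hj; exact Set.mem_iInter₂.1 hx0 j hj
    set TU : Finset (Fin n) := Finset.univ.filter (fun t => x0 ∈ U t) with hTUdef
    have hTUne : TU.Nonempty :=
      ⟨s0, Finset.mem_filter.2 ⟨Finset.mem_univ _, hZU s0 (hx0Z s0 hs0)⟩⟩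
    set t0 : Fin n := TU.min' hTUne with ht0def
    have ht0U : x0 ∈ U t0 := (Finset.mem_filter.1 (TU.min'_mem hTUne)).2
    have hW_t0 : ∀ t, x0 ∈ W t ↔ t = t0 := by
      intro t
      rw [hW_iff]
      constructor
      · rintro ⟨h1, h2⟩
        have htTU : t ∈ TU := Finset.mem_filter.2 ⟨Finset.mem_univ _, h1⟩
        have hle : t0 ≤ t := TU.min'_le t htTU
        rcases eq_or_lt_of_le hle with h | h
        · exact h.symm
        · exact absurd ht0U (h2 t0 h)
      · rintro rfl
        refine ⟨ht0U, fun u hu hxu => ?_⟩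
        have huTU : u ∈ TU := Finset.mem_filter.2 ⟨Finset.mem_univ _, hxu⟩
        exact absurd (TU.min'_le u huTU) (not_le.2 hu)
    -- the cocycle relation at `insert t0 S`
    have hco : t0 ∉ S → ∑ s ∈ insert t0 S,
        eps k s ((insert t0 S).erase s) * Ft x0 ((insert t0 S).erase s) = 0 := by
      intro ht0S
      have hcard : (insert t0 S).card = i + 2 := by
        rw [Finset.card_insert_of_notMem ht0S, hS]
      have hmemU : x0 ∈ ⋂ j ∈ insert t0 S, U j := by
        refine Set.mem_iInter₂.2 fun j hj => ?_
        rcases Finset.mem_insert.1 hj with rfl | hj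
        · exact ht0U
        · exact hZU j (hx0Z j hj)
      have hVmem := hUV ⟨insert t0 S, hcard⟩ hmemU
      have : g ⟨insert t0 S, hcard⟩ x0 = 0 := hVmem
      rwa [hgeval] at this
    -- now conclude by the key algebraic computation
    rw [lcDiff_apply X k n Z i ψ S hS x
      (fun T => ∑ t ∈ Tᶜ,
        eps k t T * (if x0 ∈ W t then (1 : k) else 0) * Ft x0 (insert t T))
      (fun T hT hx => (hψeval T hT x0 hx).symm)]
    have hkey := key_alg (k := k) S hS (Ft x0)
      (fun t => if x0 ∈ W t then (1 : k) else 0) t0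
      (fun t => by simp only [hW_t0 t]) hco
    rw [hkey]
    simp only [hFt, dif_pos hS]
    have := hφt ⟨S, hS⟩ x
    rw [this]
  · -- easy direction: the complex is a complex
    rintro ⟨ψ, rfl⟩
    funext S'
    apply LocallyConstant.ext
    intro x
    obtain ⟨S', hS'⟩ := S'
    set x0 : X := ↑x with hx0def
    set P : Finset (Fin n) → k := fun T =>
      if h : T.card = i ∧ x0 ∈ ⋂ j ∈ T, Z j then ψ ⟨T, h.1⟩ ⟨x0, h.2⟩ else 0 with hPdef
    have hGx : ∀ T (hT : T.card = i + 1) (hx : x0 ∈ ⋂ j ∈ T, Z j),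
        (∑ r ∈ T, eps k r (T.erase r) * P (T.erase r))
          = lcDiff X k n Z i ψ ⟨T, hT⟩ ⟨x0, hx⟩ := by
      intro T hT hx
      rw [lcDiff_apply X k n Z i ψ T hT ⟨x0, hx⟩ P]
      intro R hR hxR
      simp only [hPdef, dif_pos (And.intro hR hxR)]
    rw [lcDiff_apply X k n Z (i + 1) (lcDiff X k n Z i ψ) S' hS' x
      (fun T => ∑ r ∈ T, eps k r (T.erase r) * P (T.erase r))
      (fun T hT hx => hGx T hT hx)]
    have := double_cancel (k := k) S' P
    have hz : (0 : ((S : {S : Finset (Fin n) // S.card = i + 1 + 1}) →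
        LocallyConstant (↥(⋂ j ∈ S.1, Z j)) k)) ⟨S', hS'⟩ x = (0 : k) := rfl
    rw [hz, ← this]
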